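/- arXiv:2411.15861 — 5 statements merged into one kernel-verified Lean document; each statement's English description precedes it below -/
import Mathlib

section
/- For n ≥ 3, Cov(s_1², s_2 s_3) = (2/((n−1)(n−2)))·Var(s_1²). -/
/-- Expectation of a real statistic of a uniformly distributed random permutation of
`{1,…,n}`: the average over the symmetric group. -/
noncomputable def permExp (n : ℕ) (f : Equiv.Perm (Fin n) → ℝ) : ℝ :=
  (∑ σ : Equiv.Perm (Fin n), f σ) / (Nat.factorial n : ℝ)

/-- Covariance of two real statistics of a uniform random permutation of `{1,…,n}`. -/
noncomputable def permCov (n : ℕ) (f g : Equiv.Perm (Fin n) → ℝ) : ℝ :=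
  permExp n fun σ => (f σ - permExp n f) * (g σ - permExp n g)

/-- Variance of a real statistic of a uniform random permutation of `{1,…,n}`. -/
noncomputable def permVar (n : ℕ) (f : Equiv.Perm (Fin n) → ℝ) : ℝ :=
  permCov n f f

/-- The standardized rank vector: `s i = √(12/(n²−1)) · (σ(i) − (n+1)/2)`, where the rank
`σ(i) ∈ {1,…,n}` is realized as `(σ i) + 1` for `σ i : Fin n`. -/
noncomputable def srv (n : ℕ) (σ : Equiv.Perm (Fin n)) (i : Fin n) : ℝ :=
  Real.sqrt (12 / ((n : ℝ) ^ 2 - 1)) * (((σ i : ℕ) : ℝ) + 1 - ((n : ℝ) + 1) / 2)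

lemma permExp_congr {n : ℕ} {f g : Equiv.Perm (Fin n) → ℝ} (h : ∀ σ, f σ = g σ) :
    permExp n f = permExp n g := by
  unfold permExp; rw [funext h]

lemma card_perm_cast (n : ℕ) :
    ((Fintype.card (Equiv.Perm (Fin n)) : ℝ)) = (Nat.factorial n : ℝ) := by
  simp [Fintype.card_perm]

lemma permExp_const (n : ℕ) (c : ℝ) : permExp n (fun _ => c) = c := by
  unfold permExp
  rw [Finset.sum_const, Finset.card_univ, nsmul_eq_mul, card_perm_cast]
  field_simp [Nat.factorial_ne_zero]

lemma permExp_sum {n : ℕ} {ι : Type*} (s : Finset ι) (F : ι → Equiv.Perm (Fin n) → ℝ) :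
    permExp n (fun σ => ∑ j ∈ s, F j σ) = ∑ j ∈ s, permExp n (F j) := by
  unfold permExp
  rw [Finset.sum_comm, ← Finset.sum_div]

lemma permExp_const_mul {n : ℕ} (c : ℝ) (f : Equiv.Perm (Fin n) → ℝ) :
    permExp n (fun σ => c * f σ) = c * permExp n f := by
  unfold permExp
  rw [← Finset.mul_sum, mul_div_assoc]

lemma permCov_eq (n : ℕ) (f g : Equiv.Perm (Fin n) → ℝ) :
    permCov n f g = permExp n (fun σ => f σ * g σ) - permExp n f * permExp n g := by
  unfold permCov
  have h : ∀ σ, (f σ - permExp n f) * (g σ - permExp n g)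
      = f σ * g σ + (-(permExp n f)) * g σ + (-(permExp n g)) * f σ
        + permExp n f * permExp n g := fun σ => by ring
  rw [permExp_congr h]
  have hsplit : ∀ (a b : Equiv.Perm (Fin n) → ℝ),
      permExp n (fun σ => a σ + b σ) = permExp n a + permExp n b := by
    intro a b; unfold permExp; rw [Finset.sum_add_distrib, add_div]
  rw [hsplit (fun σ => f σ * g σ + (-(permExp n f)) * g σ + (-(permExp n g)) * f σ)
      (fun _ => permExp n f * permExp n g),
    hsplit (fun σ => f σ * g σ + (-(permExp n f)) * g σ) (fun σ => (-(permExp n g)) * f σ),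
    hsplit (fun σ => f σ * g σ) (fun σ => (-(permExp n f)) * g σ),
    permExp_const, permExp_const_mul, permExp_const_mul]
  ring

lemma permExp_mul_right {n : ℕ} (τ : Equiv.Perm (Fin n)) (f : Equiv.Perm (Fin n) → ℝ) :
    permExp n (fun σ => f (σ * τ)) = permExp n f := by
  unfold permExp
  congr 1
  exact Equiv.sum_comp (Equiv.mulRight τ) f

lemma srv_mul {n : ℕ} (σ τ : Equiv.Perm (Fin n)) (i : Fin n) :
    srv n (σ * τ) i = srv n σ (τ i) := by
  simp [srv, Equiv.Perm.mul_apply]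

lemma sum_range_cast (n : ℕ) : ∑ k ∈ Finset.range n, (k : ℝ) = n * (n - 1) / 2 := by
  induction n with
  | zero => simp
  | succ m ih => rw [Finset.sum_range_succ, ih]; push_cast; ring

lemma sum_range_sq_cast (n : ℕ) :
    ∑ k ∈ Finset.range n, (k : ℝ) ^ 2 = n * (n - 1) * (2 * n - 1) / 6 := by
  induction n with
  | zero => simp
  | succ m ih => rw [Finset.sum_range_succ, ih]; push_cast; ring

lemma srv_sum (n : ℕ) (σ : Equiv.Perm (Fin n)) : ∑ j : Fin n, srv n σ j = 0 := by
  unfold srv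
  rw [← Finset.mul_sum]
  have h : ∑ j : Fin n, (((σ j : ℕ) : ℝ) + 1 - ((n : ℝ) + 1) / 2)
      = ∑ k : Fin n, (((k : ℕ) : ℝ) + 1 - ((n : ℝ) + 1) / 2) :=
    Equiv.sum_comp σ (fun k => ((k : ℕ) : ℝ) + 1 - ((n : ℝ) + 1) / 2)
  rw [h, Fin.sum_univ_eq_sum_range (fun k => ((k : ℕ) : ℝ) + 1 - ((n : ℝ) + 1) / 2)]
  have h2 : ∀ k : ℕ, (k : ℝ) + 1 - ((n : ℝ) + 1) / 2 = (k : ℝ) + (1 - ((n : ℝ) + 1) / 2) :=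
    fun k => by ring
  rw [Finset.sum_congr rfl (fun k _ => h2 k), Finset.sum_add_distrib, Finset.sum_const,
    Finset.card_range, sum_range_cast, nsmul_eq_mul]
  ring

lemma srv_sq (n : ℕ) (hn : 3 ≤ n) (σ : Equiv.Perm (Fin n)) (i : Fin n) :
    (srv n σ i) ^ 2 = 12 / ((n : ℝ) ^ 2 - 1) * (((σ i : ℕ) : ℝ) + 1 - ((n : ℝ) + 1) / 2) ^ 2 := by
  have h3 : (3 : ℝ) ≤ (n : ℝ) := by exact_mod_cast hn
  have hpos : (0 : ℝ) < (n : ℝ) ^ 2 - 1 := by nlinarith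
  rw [srv, mul_pow, Real.sq_sqrt (by positivity)]

lemma srv_sum_sq (n : ℕ) (hn : 3 ≤ n) (σ : Equiv.Perm (Fin n)) :
    ∑ j : Fin n, (srv n σ j) ^ 2 = (n : ℝ) := by
  have h3 : (3 : ℝ) ≤ (n : ℝ) := by exact_mod_cast hn
  have hpos : (0 : ℝ) < (n : ℝ) ^ 2 - 1 := by nlinarith
  rw [Finset.sum_congr rfl (fun j _ => srv_sq n hn σ j), ← Finset.mul_sum]
  have h : ∑ j : Fin n, (((σ j : ℕ) : ℝ) + 1 - ((n : ℝ) + 1) / 2) ^ 2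
      = ∑ k : Fin n, (((k : ℕ) : ℝ) + 1 - ((n : ℝ) + 1) / 2) ^ 2 :=
    Equiv.sum_comp σ (fun k => (((k : ℕ) : ℝ) + 1 - ((n : ℝ) + 1) / 2) ^ 2)
  rw [h, Fin.sum_univ_eq_sum_range (fun k => (((k : ℕ) : ℝ) + 1 - ((n : ℝ) + 1) / 2) ^ 2)]
  have h2 : ∀ k : ℕ, ((k : ℝ) + 1 - ((n : ℝ) + 1) / 2) ^ 2
      = (k : ℝ) ^ 2 + (2 - ((n : ℝ) + 1)) * (k : ℝ) + (1 - ((n : ℝ) + 1) / 2) ^ 2 :=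
    fun k => by ring
  rw [Finset.sum_congr rfl (fun k _ => h2 k), Finset.sum_add_distrib, Finset.sum_add_distrib,
    Finset.sum_const, Finset.card_range, ← Finset.mul_sum, sum_range_cast, sum_range_sq_cast,
    nsmul_eq_mul]
  field_simp
  ring

lemma exch1 {n : ℕ} (F : ℝ → ℝ) (i j : Fin n) :
    permExp n (fun σ => F (srv n σ j)) = permExp n (fun σ => F (srv n σ i)) := by
  have h := permExp_mul_right (Equiv.swap i j) (fun σ => F (srv n σ i))
  rw [← h]
  apply permExp_congr
  intro σ
  rw [srv_mul, Equiv.swap_apply_left]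

lemma exch2 {n : ℕ} (F : ℝ → ℝ → ℝ) (i a b : Fin n) (hai : a ≠ i) (hbi : b ≠ i) :
    permExp n (fun σ => F (srv n σ i) (srv n σ b))
      = permExp n (fun σ => F (srv n σ i) (srv n σ a)) := by
  have h := permExp_mul_right (Equiv.swap a b) (fun σ => F (srv n σ i) (srv n σ b))
  rw [← h]
  apply permExp_congr
  intro σ
  rw [srv_mul, srv_mul, Equiv.swap_apply_of_ne_of_ne hai.symm hbi.symm,
    Equiv.swap_apply_right]

lemma exch3 {n : ℕ} (F : ℝ → ℝ → ℝ → ℝ) (i j a b : Fin n)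
    (hai : a ≠ i) (haj : a ≠ j) (hbi : b ≠ i) (hbj : b ≠ j) :
    permExp n (fun σ => F (srv n σ i) (srv n σ j) (srv n σ b))
      = permExp n (fun σ => F (srv n σ i) (srv n σ j) (srv n σ a)) := by
  have h := permExp_mul_right (Equiv.swap a b)
    (fun σ => F (srv n σ i) (srv n σ j) (srv n σ b))
  rw [← h]
  apply permExp_congr
  intro σ
  rw [srv_mul, srv_mul, srv_mul, Equiv.swap_apply_of_ne_of_ne hai.symm hbi.symm,
    Equiv.swap_apply_of_ne_of_ne haj.symm hbj.symm, Equiv.swap_apply_right]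

lemma cast_sub_one {n : ℕ} (hn : 3 ≤ n) : ((n - 1 : ℕ) : ℝ) = (n : ℝ) - 1 := by
  rw [Nat.cast_sub (by omega), Nat.cast_one]

lemma cast_sub_two {n : ℕ} (hn : 3 ≤ n) : ((n - 1 - 1 : ℕ) : ℝ) = (n : ℝ) - 2 := by
  rw [Nat.cast_sub (by omega), Nat.cast_sub (by omega), Nat.cast_one]
  ring

lemma split_zero {n : ℕ} (e0 : Fin n) (F : ℝ → ℝ) :
    permExp n (fun σ => ∑ j : Fin n, F (srv n σ j))
      = (n : ℝ) * permExp n (fun σ => F (srv n σ e0)) := by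
  rw [permExp_sum Finset.univ (fun j σ => F (srv n σ j)),
    Finset.sum_congr rfl (fun j _ => exch1 F e0 j), Finset.sum_const, Finset.card_univ,
    Fintype.card_fin, nsmul_eq_mul]

lemma split_one {n : ℕ} (hn : 3 ≤ n) (e0 e1 : Fin n) (h01 : e0 ≠ e1) (F : ℝ → ℝ → ℝ) :
    permExp n (fun σ => ∑ j : Fin n, F (srv n σ e0) (srv n σ j))
      = permExp n (fun σ => F (srv n σ e0) (srv n σ e0))
        + ((n : ℝ) - 1) * permExp n (fun σ => F (srv n σ e0) (srv n σ e1)) := by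
  rw [permExp_sum Finset.univ (fun j σ => F (srv n σ e0) (srv n σ j)),
    ← Finset.add_sum_erase _ _ (Finset.mem_univ e0)]
  congr 1
  have heach : ∀ j ∈ Finset.univ.erase e0,
      permExp n (fun σ => F (srv n σ e0) (srv n σ j))
        = permExp n (fun σ => F (srv n σ e0) (srv n σ e1)) := by
    intro j hj
    exact exch2 F e0 e1 j h01.symm (Finset.mem_erase.mp hj).1
  rw [Finset.sum_congr rfl heach, Finset.sum_const,
    Finset.card_erase_of_mem (Finset.mem_univ e0), Finset.card_univ, Fintype.card_fin,
    nsmul_eq_mul, cast_sub_one hn]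

lemma split_two {n : ℕ} (hn : 3 ≤ n) (e0 e1 e2 : Fin n)
    (h01 : e0 ≠ e1) (h02 : e0 ≠ e2) (h12 : e1 ≠ e2) (F : ℝ → ℝ → ℝ → ℝ) :
    permExp n (fun σ => ∑ j : Fin n, F (srv n σ e0) (srv n σ e1) (srv n σ j))
      = permExp n (fun σ => F (srv n σ e0) (srv n σ e1) (srv n σ e0))
        + permExp n (fun σ => F (srv n σ e0) (srv n σ e1) (srv n σ e1))
        + ((n : ℝ) - 2) * permExp n (fun σ => F (srv n σ e0) (srv n σ e1) (srv n σ e2)) := by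
  rw [permExp_sum Finset.univ (fun j σ => F (srv n σ e0) (srv n σ e1) (srv n σ j)),
    ← Finset.add_sum_erase _ _ (Finset.mem_univ e0),
    ← Finset.add_sum_erase _ _ (Finset.mem_erase.mpr ⟨h01.symm, Finset.mem_univ e1⟩),
    ← add_assoc]
  congr 1
  have heach : ∀ j ∈ (Finset.univ.erase e0).erase e1,
      permExp n (fun σ => F (srv n σ e0) (srv n σ e1) (srv n σ j))
        = permExp n (fun σ => F (srv n σ e0) (srv n σ e1) (srv n σ e2)) := by
    intro j hj
    rcases Finset.mem_erase.mp hj with ⟨hj1, hj'⟩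
    rcases Finset.mem_erase.mp hj' with ⟨hj0, -⟩
    exact exch3 F e0 e1 e2 j h02.symm h12.symm hj0 hj1
  rw [Finset.sum_congr rfl heach, Finset.sum_const,
    Finset.card_erase_of_mem (Finset.mem_erase.mpr ⟨h01.symm, Finset.mem_univ e1⟩),
    Finset.card_erase_of_mem (Finset.mem_univ e0), Finset.card_univ, Fintype.card_fin,
    nsmul_eq_mul, cast_sub_two hn]

theorem main_aux (n : ℕ) (hn : 3 ≤ n) (e0 e1 e2 : Fin n)
    (h01 : e0 ≠ e1) (h02 : e0 ≠ e2) (h12 : e1 ≠ e2) :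
    permCov n (fun σ => (srv n σ e0) ^ 2) (fun σ => srv n σ e1 * srv n σ e2)
      = (2 / (((n : ℝ) - 1) * ((n : ℝ) - 2)))
          * permCov n (fun σ => (srv n σ e0) ^ 2) (fun σ => (srv n σ e0) ^ 2) := by
  have hnR : (3 : ℝ) ≤ (n : ℝ) := by exact_mod_cast hn
  set A := permExp n (fun σ => (srv n σ e0) ^ 4) with hA
  set B := permExp n (fun σ => (srv n σ e0) ^ 2) with hBdef
  set C := permExp n (fun σ => (srv n σ e0) ^ 2 * (srv n σ e1) ^ 2) with hC
  set D := permExp n (fun σ => (srv n σ e0) ^ 3 * srv n σ e1) with hD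
  set G := permExp n (fun σ => (srv n σ e0) ^ 2 * (srv n σ e1 * srv n σ e2)) with hG
  set H := permExp n (fun σ => srv n σ e0 * srv n σ e1) with hH
  -- B = 1
  have hB : B = 1 := by
    have h := split_zero e0 (fun x => x ^ 2)
    rw [permExp_congr (fun σ => srv_sum_sq n hn σ), permExp_const] at h
    have hn0 : (n : ℝ) ≠ 0 := by positivity
    rw [hBdef]
    field_simp at h ⊢
    linarith
  -- A + (n-1) D = 0
  have h1 : A + ((n : ℝ) - 1) * D = 0 := by
    have h := split_one hn e0 e1 h01 (fun x y => x ^ 3 * y)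
    have hz : permExp n (fun σ => ∑ j : Fin n, (srv n σ e0) ^ 3 * srv n σ j) = 0 := by
      rw [permExp_congr (fun σ => by rw [← Finset.mul_sum, srv_sum, mul_zero]),
        permExp_const]
    rw [hz] at h
    have hAeq : permExp n (fun σ => (srv n σ e0) ^ 3 * srv n σ e0) = A := by
      rw [hA]; exact permExp_congr (fun σ => by ring)
    rw [hAeq] at h
    linarith [h]
  -- n * B = A + (n-1) * C
  have h3 : (n : ℝ) * B = A + ((n : ℝ) - 1) * C := by
    have h := split_one hn e0 e1 h01 (fun x y => x ^ 2 * y ^ 2)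
    have hz : permExp n (fun σ => ∑ j : Fin n, (srv n σ e0) ^ 2 * (srv n σ j) ^ 2)
        = (n : ℝ) * B := by
      rw [permExp_congr (fun σ => by rw [← Finset.mul_sum, srv_sum_sq n hn σ, mul_comm]),
        permExp_const_mul]
    rw [hz] at h
    have hAeq : permExp n (fun σ => (srv n σ e0) ^ 2 * (srv n σ e0) ^ 2) = A := by
      rw [hA]; exact permExp_congr (fun σ => by ring)
    rw [hAeq] at h
    linarith [h]
  -- B + (n-1) H = 0
  have h5 : B + ((n : ℝ) - 1) * H = 0 := by
    have h := split_one hn e0 e1 h01 (fun x y => x * y)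
    have hz : permExp n (fun σ => ∑ j : Fin n, srv n σ e0 * srv n σ j) = 0 := by
      rw [permExp_congr (fun σ => by rw [← Finset.mul_sum, srv_sum, mul_zero]),
        permExp_const]
    rw [hz] at h
    have hBeq : permExp n (fun σ => srv n σ e0 * srv n σ e0) = B := by
      rw [hBdef]; exact permExp_congr (fun σ => by ring)
    rw [hBeq] at h
    linarith [h]
  -- D + C + (n-2) G = 0
  have h6 : D + C + ((n : ℝ) - 2) * G = 0 := by
    have h := split_two hn e0 e1 e2 h01 h02 h12 (fun x y z => x ^ 2 * y * z)
    have hz : permExp n (fun σ => ∑ j : Fin n, (srv n σ e0) ^ 2 * srv n σ e1 * srv n σ j)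
        = 0 := by
      rw [permExp_congr (fun σ => by rw [← Finset.mul_sum, srv_sum, mul_zero]),
        permExp_const]
    rw [hz] at h
    have hDeq : permExp n (fun σ => (srv n σ e0) ^ 2 * srv n σ e1 * srv n σ e0) = D := by
      rw [hD]; exact permExp_congr (fun σ => by ring)
    have hCeq : permExp n (fun σ => (srv n σ e0) ^ 2 * srv n σ e1 * srv n σ e1) = C := by
      rw [hC]; exact permExp_congr (fun σ => by ring)
    have hGeq : permExp n (fun σ => (srv n σ e0) ^ 2 * srv n σ e1 * srv n σ e2) = G := by
      rw [hG]; exact permExp_congr (fun σ => by ring)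
    rw [hDeq, hCeq, hGeq] at h
    linarith [h]
  -- E[g] = H
  have hEg : permExp n (fun σ => srv n σ e1 * srv n σ e2) = H := by
    rw [hH]
    have h := permExp_mul_right (Equiv.swap e0 e2 * Equiv.swap e0 e1)
      (fun σ => srv n σ e0 * srv n σ e1)
    rw [← h]
    apply permExp_congr
    intro σ
    simp only [srv_mul, Equiv.Perm.mul_apply, Equiv.swap_apply_left,
      Equiv.swap_apply_right]
    rw [Equiv.swap_apply_of_ne_of_ne h01.symm h12]
  -- rewrite covariances
  rw [permCov_eq, permCov_eq, hEg]
  have hfg : permExp n (fun σ => (srv n σ e0) ^ 2 * (srv n σ e1 * srv n σ e2)) = G := rfl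
  have hff : permExp n (fun σ => (srv n σ e0) ^ 2 * (srv n σ e0) ^ 2) = A := by
    rw [hA]; exact permExp_congr (fun σ => by ring)
  rw [hfg, hff, ← hBdef]
  have hn1 : ((n : ℝ) - 1) ≠ 0 := by nlinarith
  have hn2 : ((n : ℝ) - 2) ≠ 0 := by nlinarith
  rw [hB] at h3 h5 ⊢
  have key : (G - H) * (((n : ℝ) - 1) * ((n : ℝ) - 2)) = 2 * (A - 1) := by
    linear_combination ((n : ℝ) - 1) * h6 - h1 + h3 - ((n : ℝ) - 2) * h5
  rw [div_mul_eq_mul_div, eq_div_iff (mul_ne_zero hn1 hn2)]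
  linear_combination key

/-- For `n ≥ 3`, `Cov(s₁², s₂s₃) = (2/((n−1)(n−2)))·Var(s₁²)`. -/
theorem cov_srv_sq_disjoint (n : ℕ) (hn : 3 ≤ n) :
    permCov n (fun σ => (srv n σ ⟨0, by omega⟩) ^ 2)
        (fun σ => srv n σ ⟨1, by omega⟩ * srv n σ ⟨2, by omega⟩)
      = (2 / (((n : ℝ) - 1) * ((n : ℝ) - 2)))
          * permVar n (fun σ => (srv n σ ⟨0, by omega⟩) ^ 2) := by
  have h01 : (⟨0, by omega⟩ : Fin n) ≠ ⟨1, by omega⟩ := by simp [Fin.ext_iff]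
  have h02 : (⟨0, by omega⟩ : Fin n) ≠ ⟨2, by omega⟩ := by simp [Fin.ext_iff]
  have h12 : (⟨1, by omega⟩ : Fin n) ≠ ⟨2, by omega⟩ := by simp [Fin.ext_iff]
  rw [permVar]
  exact main_aux n hn _ _ _ h01 h02 h12
end

section
/- Let A = (a_{ij}) and B = (b_{ij}) be symmetric real n×n matrices. Then the sum of a_{ij} b_{kl} over all quadruples (i,j,k,l) of pairwise distinct indices in {1,…,n} equals (1ᵀA1)(1ᵀB1) − 4·1ᵀAB1 + 4·1ᵀA·diag(B) + 4·1ᵀB·diag(A) − tr(A)·(1ᵀB1) − tr(B)·(1ᵀA1) − 6·tr(A∘B) + 2·tr(AB) + tr(A)·tr(B), where 1 is the all-ones vector in ℝⁿ, diag(M) ∈ ℝⁿ is the vector of diagonal entries of M, and A∘B is the entrywise (Hadamard) product. -/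
private lemma sum_ne_one {n : ℕ} (f : Fin n → ℝ) (i : Fin n) :
    (∑ j, if j ≠ i then f j else 0) = (∑ j, f j) - f i := by
  have h : ∀ j, (if j ≠ i then f j else 0) = f j - (if j = i then f j else 0) := by
    intro j; by_cases hj : j = i <;> simp [hj]
  rw [Finset.sum_congr rfl fun j _ => h j]
  simp [Finset.sum_sub_distrib, Finset.sum_ite_eq']

private lemma sum_ne_two {n : ℕ} (f : Fin n → ℝ) (i j : Fin n) (hij : i ≠ j) :
    (∑ k, if k ≠ i ∧ k ≠ j then f k else 0) = (∑ k, f k) - f i - f j := by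
  have h : ∀ k, (if k ≠ i ∧ k ≠ j then f k else 0)
      = f k - (if k = i then f k else 0) - (if k = j then f k else 0) := by
    intro k; by_cases h1 : k = i <;> by_cases h2 : k = j <;> simp_all
  rw [Finset.sum_congr rfl fun k _ => h k]
  simp [Finset.sum_sub_distrib, Finset.sum_ite_eq']

private lemma sum_ne_three {n : ℕ} (f : Fin n → ℝ) (i j k : Fin n)
    (hij : i ≠ j) (hik : i ≠ k) (hjk : j ≠ k) :
    (∑ l, if l ≠ i ∧ l ≠ j ∧ l ≠ k then f l else 0)
      = (∑ l, f l) - f i - f j - f k := by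
  have h : ∀ l, (if l ≠ i ∧ l ≠ j ∧ l ≠ k then f l else 0)
      = f l - (if l = i then f l else 0) - (if l = j then f l else 0)
          - (if l = k then f l else 0) := by
    intro l
    by_cases h1 : l = i <;> by_cases h2 : l = j <;> by_cases h3 : l = k <;> simp_all
  rw [Finset.sum_congr rfl fun l _ => h l]
  simp [Finset.sum_sub_distrib, Finset.sum_ite_eq']

/-- For symmetric real `n×n` matrices `A, B`, the sum of `aᵢⱼ b_{kl}` over
quadruples of pairwise distinct indices equals
`(1ᵀA1)(1ᵀB1) − 4·1ᵀAB1 + 4·1ᵀA diag(B) + 4·1ᵀB diag(A) − tr(A)(1ᵀB1) − tr(B)(1ᵀA1)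
  − 6 tr(A∘B) + 2 tr(AB) + tr(A) tr(B)`. -/
theorem sum_pairwise_distinct_quadruples (n : ℕ) (hn : 0 < n)
    (A B : Matrix (Fin n) (Fin n) ℝ) (hA : A.IsSymm) (hB : B.IsSymm) :
    (∑ i : Fin n, ∑ j : Fin n, ∑ k : Fin n, ∑ l : Fin n,
        if i ≠ j ∧ i ≠ k ∧ i ≠ l ∧ j ≠ k ∧ j ≠ l ∧ k ≠ l then A i j * B k l else 0)
      = (∑ i : Fin n, ∑ j : Fin n, A i j) * (∑ i : Fin n, ∑ j : Fin n, B i j)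
        - 4 * (∑ i : Fin n, ∑ j : Fin n, (A * B) i j)
        + 4 * (∑ i : Fin n, ∑ j : Fin n, A i j * B j j)
        + 4 * (∑ i : Fin n, ∑ j : Fin n, B i j * A j j)
        - A.trace * (∑ i : Fin n, ∑ j : Fin n, B i j)
        - B.trace * (∑ i : Fin n, ∑ j : Fin n, A i j)
        - 6 * (Matrix.hadamard A B).trace
        + 2 * (A * B).trace
        + A.trace * B.trace := by
  have hA' : ∀ i j, A j i = A i j := fun i j => hA.apply i j
  have hB' : ∀ i j, B j i = B i j := fun i j => hB.apply i j
  -- key computation of the LHS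
  have key : (∑ i : Fin n, ∑ j : Fin n, ∑ k : Fin n, ∑ l : Fin n,
        if i ≠ j ∧ i ≠ k ∧ i ≠ l ∧ j ≠ k ∧ j ≠ l ∧ k ≠ l then A i j * B k l else 0)
      = (∑ i : Fin n, ∑ j : Fin n, A i j) * ((∑ i : Fin n, ∑ j : Fin n, B i j)
            - (∑ i : Fin n, B i i))
        - 2 * (∑ i : Fin n, (∑ j : Fin n, A i j) * (∑ j : Fin n, B i j))
        - 2 * (∑ i : Fin n, ∑ j : Fin n, A i j * (∑ l : Fin n, B j l))
        + 2 * (∑ i : Fin n, (∑ j : Fin n, A i j) * B i i)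
        + 2 * (∑ i : Fin n, ∑ j : Fin n, A i j * B i j)
        + 2 * (∑ i : Fin n, ∑ j : Fin n, A i j * B j j)
        - ((∑ i : Fin n, A i i) * ((∑ i : Fin n, ∑ j : Fin n, B i j)
            - (∑ i : Fin n, B i i))
          - 4 * (∑ i : Fin n, A i i * (∑ l : Fin n, B i l))
          + 6 * (∑ i : Fin n, A i i * B i i)) := by
    calc (∑ i : Fin n, ∑ j : Fin n, ∑ k : Fin n, ∑ l : Fin n,
        if i ≠ j ∧ i ≠ k ∧ i ≠ l ∧ j ≠ k ∧ j ≠ l ∧ k ≠ l then A i j * B k l else 0)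
        = ∑ i : Fin n, ∑ j : Fin n, ∑ k : Fin n,
            (if i ≠ j ∧ i ≠ k ∧ j ≠ k then
              A i j * ((∑ l, B k l) - B k i - B k j - B k k) else 0) := by
          refine Finset.sum_congr rfl fun i _ => Finset.sum_congr rfl fun j _ =>
            Finset.sum_congr rfl fun k _ => ?_
          by_cases h : i ≠ j ∧ i ≠ k ∧ j ≠ k
          · obtain ⟨hij, hik, hjk⟩ := h
            rw [if_pos ⟨hij, hik, hjk⟩]
            have hc : ∀ l, (if i ≠ j ∧ i ≠ k ∧ i ≠ l ∧ j ≠ k ∧ j ≠ l ∧ k ≠ l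
                then A i j * B k l else 0)
                = A i j * (if l ≠ i ∧ l ≠ j ∧ l ≠ k then B k l else 0) := by
              intro l
              have hiff : (i ≠ j ∧ i ≠ k ∧ i ≠ l ∧ j ≠ k ∧ j ≠ l ∧ k ≠ l)
                  ↔ (l ≠ i ∧ l ≠ j ∧ l ≠ k) :=
                ⟨fun ⟨_, _, h3, _, h5, h6⟩ => ⟨h3.symm, h5.symm, h6.symm⟩,
                 fun ⟨p, q, r⟩ => ⟨hij, hik, p.symm, hjk, q.symm, r.symm⟩⟩
              rw [if_congr hiff rfl rfl, mul_ite, mul_zero]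
            rw [Finset.sum_congr rfl fun l _ => hc l, ← Finset.mul_sum,
              sum_ne_three (B k) i j k hij hik hjk]
          · rw [if_neg h]
            refine Finset.sum_eq_zero fun l _ => ?_
            rw [if_neg]; tauto
      _ = ∑ i : Fin n, ∑ j : Fin n,
            (if i ≠ j then
              A i j * ((∑ k : Fin n, ∑ l : Fin n, B k l) - (∑ k : Fin n, B k k)
                - 2 * (∑ l, B i l) - 2 * (∑ l, B j l)
                + 2 * B i i + 2 * B i j + 2 * B j j) else 0) := by
          refine Finset.sum_congr rfl fun i _ => Finset.sum_congr rfl fun j _ => ?_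
          by_cases hij : i = j
          · simp [hij]
          · have hij' : i ≠ j := hij
            have hc : ∀ k, (if i ≠ j ∧ i ≠ k ∧ j ≠ k then
                  A i j * ((∑ l, B k l) - B k i - B k j - B k k) else 0)
                = (if k ≠ i ∧ k ≠ j then
                  A i j * ((∑ l, B k l) - B k i - B k j - B k k) else 0) := by
              intro k
              exact if_congr ⟨fun ⟨_, h2, h3⟩ => ⟨h2.symm, h3.symm⟩,
                fun ⟨h2, h3⟩ => ⟨hij', h2.symm, h3.symm⟩⟩ rfl rfl
            rw [Finset.sum_congr rfl fun k _ => hc k,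
              sum_ne_two (fun k => A i j * ((∑ l, B k l) - B k i - B k j - B k k)) i j hij',
              if_pos hij']
            have e1 : (∑ k, A i j * ((∑ l, B k l) - B k i - B k j - B k k))
                = A i j * ((∑ k : Fin n, ∑ l : Fin n, B k l) - (∑ k, B k i)
                    - (∑ k, B k j) - (∑ k, B k k)) := by
              rw [← Finset.mul_sum, Finset.sum_sub_distrib, Finset.sum_sub_distrib,
                Finset.sum_sub_distrib]
            have e2 : (∑ k, B k i) = ∑ l, B i l :=
              Finset.sum_congr rfl fun k _ => hB' i k
            have e3 : (∑ k, B k j) = ∑ l, B j l :=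
              Finset.sum_congr rfl fun k _ => hB' j k
            rw [e1, e2, e3, hB' i j]
            ring
      _ = ∑ i : Fin n,
            ((∑ j : Fin n, A i j * ((∑ k : Fin n, ∑ l : Fin n, B k l) - (∑ k : Fin n, B k k)
                - 2 * (∑ l, B i l) - 2 * (∑ l, B j l)
                + 2 * B i i + 2 * B i j + 2 * B j j))
              - A i i * ((∑ k : Fin n, ∑ l : Fin n, B k l) - (∑ k : Fin n, B k k)
                - 2 * (∑ l, B i l) - 2 * (∑ l, B i l)
                + 2 * B i i + 2 * B i i + 2 * B i i)) := by
          refine Finset.sum_congr rfl fun i _ => ?_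
          rw [Finset.sum_congr rfl fun j _ => if_congr ne_comm rfl rfl,
            sum_ne_one (fun j => A i j * ((∑ k : Fin n, ∑ l : Fin n, B k l)
              - (∑ k : Fin n, B k k) - 2 * (∑ l, B i l) - 2 * (∑ l, B j l)
              + 2 * B i i + 2 * B i j + 2 * B j j)) i]
      _ = _ := by
          have hp : ∀ i, (∑ j : Fin n, A i j * ((∑ k : Fin n, ∑ l : Fin n, B k l)
                - (∑ k : Fin n, B k k) - 2 * (∑ l, B i l) - 2 * (∑ l, B j l)
                + 2 * B i i + 2 * B i j + 2 * B j j))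
              = (∑ j : Fin n, A i j) * ((∑ k : Fin n, ∑ l : Fin n, B k l)
                  - (∑ k : Fin n, B k k))
                - 2 * ((∑ j : Fin n, A i j) * (∑ l, B i l))
                - 2 * (∑ j : Fin n, A i j * (∑ l, B j l))
                + 2 * ((∑ j : Fin n, A i j) * B i i)
                + 2 * (∑ j : Fin n, A i j * B i j)
                + 2 * (∑ j : Fin n, A i j * B j j) := by
            intro i
            have hq : ∀ j, A i j * ((∑ k : Fin n, ∑ l : Fin n, B k l)
                - (∑ k : Fin n, B k k) - 2 * (∑ l, B i l) - 2 * (∑ l, B j l)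
                + 2 * B i i + 2 * B i j + 2 * B j j)
                = A i j * ((∑ k : Fin n, ∑ l : Fin n, B k l) - (∑ k : Fin n, B k k))
                  - 2 * (A i j * (∑ l, B i l))
                  - 2 * (A i j * (∑ l, B j l))
                  + 2 * (A i j * B i i)
                  + 2 * (A i j * B i j)
                  + 2 * (A i j * B j j) := fun j => by ring
            rw [Finset.sum_congr rfl fun j _ => hq j]
            simp only [Finset.sum_add_distrib, Finset.sum_sub_distrib,
              ← Finset.mul_sum, ← Finset.sum_mul]
          have hr : ∀ i, A i i * ((∑ k : Fin n, ∑ l : Fin n, B k l)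
                - (∑ k : Fin n, B k k) - 2 * (∑ l, B i l) - 2 * (∑ l, B i l)
                + 2 * B i i + 2 * B i i + 2 * B i i)
              = A i i * ((∑ k : Fin n, ∑ l : Fin n, B k l) - (∑ k : Fin n, B k k))
                - 4 * (A i i * (∑ l, B i l)) + 6 * (A i i * B i i) := fun i => by ring
          rw [Finset.sum_congr rfl fun i _ => by rw [hp i, hr i]]
          simp only [Finset.sum_add_distrib, Finset.sum_sub_distrib,
            ← Finset.mul_sum, ← Finset.sum_mul]
  -- bridging lemmas
  have M4 : (∑ i : Fin n, ∑ j : Fin n, (A * B) i j)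
      = ∑ i : Fin n, (∑ j : Fin n, A i j) * (∑ j : Fin n, B i j) := by
    calc (∑ i : Fin n, ∑ j : Fin n, (A * B) i j)
        = ∑ i : Fin n, ∑ j : Fin n, ∑ k : Fin n, A i k * B k j := by
          simp [Matrix.mul_apply]
      _ = ∑ i : Fin n, ∑ k : Fin n, A i k * (∑ j : Fin n, B k j) := by
          refine Finset.sum_congr rfl fun i _ => ?_
          rw [Finset.sum_comm]
          exact Finset.sum_congr rfl fun k _ => (Finset.mul_sum _ _ _).symm
      _ = ∑ k : Fin n, ∑ i : Fin n, A i k * (∑ j : Fin n, B k j) := Finset.sum_comm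
      _ = ∑ k : Fin n, (∑ i : Fin n, A i k) * (∑ j : Fin n, B k j) :=
          Finset.sum_congr rfl fun k _ => (Finset.sum_mul _ _ _).symm
      _ = ∑ k : Fin n, (∑ i : Fin n, A k i) * (∑ j : Fin n, B k j) := by
          refine Finset.sum_congr rfl fun k _ => ?_
          rw [Finset.sum_congr rfl fun i _ => hA' k i]
  have M1 : (∑ i : Fin n, ∑ j : Fin n, A i j * (∑ l : Fin n, B j l))
      = ∑ i : Fin n, (∑ j : Fin n, A i j) * (∑ j : Fin n, B i j) := by
    rw [Finset.sum_comm]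
    refine Finset.sum_congr rfl fun j _ => ?_
    rw [← Finset.sum_mul]
    congr 1
    exact Finset.sum_congr rfl fun i _ => hA' j i
  have M2 : (∑ i : Fin n, ∑ j : Fin n, A i j * B j j)
      = ∑ i : Fin n, (∑ j : Fin n, A i j) * B i i := by
    rw [Finset.sum_comm]
    refine Finset.sum_congr rfl fun j _ => ?_
    rw [← Finset.sum_mul]
    congr 1
    exact Finset.sum_congr rfl fun i _ => hA' j i
  have M5 : (∑ i : Fin n, ∑ j : Fin n, B i j * A j j)
      = ∑ i : Fin n, (∑ j : Fin n, B i j) * A i i := by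
    rw [Finset.sum_comm]
    refine Finset.sum_congr rfl fun j _ => ?_
    rw [← Finset.sum_mul]
    congr 1
    exact Finset.sum_congr rfl fun i _ => hB' j i
  have M3 : (∑ i : Fin n, A i i * (∑ l : Fin n, B i l))
      = ∑ i : Fin n, (∑ j : Fin n, B i j) * A i i :=
    Finset.sum_congr rfl fun i _ => mul_comm _ _
  have T1 : A.trace = ∑ i : Fin n, A i i := rfl
  have T2 : B.trace = ∑ i : Fin n, B i i := rfl
  have T3 : (Matrix.hadamard A B).trace = ∑ i : Fin n, A i i * B i i := rfl
  have T4 : (A * B).trace = ∑ i : Fin n, ∑ j : Fin n, A i j * B i j := by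
    simp only [Matrix.trace, Matrix.diag_apply, Matrix.mul_apply]
    exact Finset.sum_congr rfl fun i _ => Finset.sum_congr rfl fun j _ => by rw [hB' i j]
  rw [key, M1, M2, M3, M4, M5, T1, T2, T3, T4]
  ring
end

section
/- Let n ≥ 2 and p ≥ 1 be integers and let X = (X_{ij}) be a real n×p matrix such that in each column the n entries are pairwise distinct. Define the ranks r_{ij} = #{k ∈ {1,…,n} : X_{kj} ≤ X_{ij}}, the rank vectors r_i = (r_{i1},…,r_{ip})ᵀ, Spearman's rank correlation matrix ρ_n = (12/(n(n²−1))) Σ_{k=1}^n (r_k − ((n+1)/2)·1_p)(r_k − ((n+1)/2)·1_p)ᵀ, and for i ≠ j the sign vectors A_{ij} ∈ ℝ^p with l-th coordinate sign(X_{il} − X_{jl}). Then ρ_n = (3/(n(n²−1))) Σ_i Σ_{j≠i} Σ_{k≠i} A_{ij} A_{ik}ᵀ, where j and k each range over all indices in {1,…,n} different from i (including j = k). -/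
open Finset

/-- For an `n×p` data matrix `X` whose columns have pairwise distinct
entries, with ranks `rᵢⱼ = #{k : X_{kj} ≤ X_{ij}}`, Spearman's rank correlation matrix
`ρₙ = (12/(n(n²−1))) Σ_k (r_k − (n+1)/2·1_p)(r_k − (n+1)/2·1_p)ᵀ` admits the sign
representation `ρₙ = (3/(n(n²−1))) Σᵢ Σ_{j≠i} Σ_{k≠i} A_{ij}A_{ik}ᵀ`, where
`A_{ij} ∈ ℝᵖ` has `l`-th coordinate `sign(X_{il} − X_{jl})`. -/
theorem spearman_sign_representation (n p : ℕ) (hn : 2 ≤ n) (hp : 1 ≤ p)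
    (X : Fin n → Fin p → ℝ) (hX : ∀ j : Fin p, Function.Injective (fun k => X k j))
    (r : Fin n → Fin p → ℕ)
    (hr : ∀ i j, r i j = (univ.filter (fun k : Fin n => X k j ≤ X i j)).card)
    (ρ : Matrix (Fin p) (Fin p) ℝ)
    (hρ : ρ = (12 / ((n : ℝ) * ((n : ℝ) ^ 2 - 1))) •
        ∑ k : Fin n, Matrix.vecMulVec
          (fun l => (r k l : ℝ) - ((n : ℝ) + 1) / 2)
          (fun l => (r k l : ℝ) - ((n : ℝ) + 1) / 2))
    (A : Fin n → Fin n → (Fin p → ℝ))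
    (hA : ∀ i j, A i j = fun l => Real.sign (X i l - X j l)) :
    ρ = (3 / ((n : ℝ) * ((n : ℝ) ^ 2 - 1))) •
        ∑ i : Fin n, ∑ j ∈ univ.erase i, ∑ k ∈ univ.erase i,
          Matrix.vecMulVec (A i j) (A i k) := by
  classical
  have hD : ∀ (i : Fin n) (l : Fin p),
      ∑ j ∈ univ.erase i, Real.sign (X i l - X j l)
        = 2 * (r i l : ℝ) - (n : ℝ) - 1 := by
    intro i l
    set S1 := (univ.erase i).filter (fun j => X j l < X i l) with hS1
    set S2 := (univ.erase i).filter (fun j => ¬ X j l < X i l) with hS2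
    have hsplit : ∑ j ∈ univ.erase i, Real.sign (X i l - X j l)
        = (∑ j ∈ S1, Real.sign (X i l - X j l))
          + ∑ j ∈ S2, Real.sign (X i l - X j l) :=
      (Finset.sum_filter_add_sum_filter_not _ _ _).symm
    have h1 : ∑ j ∈ S1, Real.sign (X i l - X j l) = (S1.card : ℝ) := by
      rw [Finset.sum_congr rfl (fun j hj => Real.sign_of_pos ?_), Finset.sum_const,
        nsmul_eq_mul, mul_one]
      simp only [hS1, Finset.mem_filter] at hj
      linarith [hj.2]
    have h2 : ∑ j ∈ S2, Real.sign (X i l - X j l) = -(S2.card : ℝ) := by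
      rw [Finset.sum_congr rfl (fun j hj => Real.sign_of_neg ?_), Finset.sum_const,
        nsmul_eq_mul, mul_neg_one]
      simp only [hS2, Finset.mem_filter, Finset.mem_erase] at hj
      have hne : X j l ≠ X i l := fun h => hj.1.1 (hX l h)
      have := hj.2
      rcases lt_or_gt_of_ne hne with h | h
      · exact absurd h this
      · linarith
    have hins : univ.filter (fun k : Fin n => X k l ≤ X i l) = insert i S1 := by
      ext k
      simp only [Finset.mem_filter, Finset.mem_univ, true_and, Finset.mem_insert,
        hS1, Finset.mem_erase]
      constructor
      · intro hk
        by_cases h : k = i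
        · exact Or.inl h
        · exact Or.inr ⟨⟨h, trivial⟩, lt_of_le_of_ne hk (fun he => h (hX l he))⟩
      · rintro (h | h)
        · simp [h]
        · exact le_of_lt h.2
    have hiS1 : i ∉ S1 := by simp [hS1]
    have hr1 : (r i l : ℝ) = (S1.card : ℝ) + 1 := by
      rw [hr i l, hins, Finset.card_insert_of_notMem hiS1]
      push_cast; ring
    have htot : (S1.card : ℝ) + (S2.card : ℝ) = (n : ℝ) - 1 := by
      have := Finset.card_filter_add_card_filter_not
        (s := univ.erase i) (p := fun j => X j l < X i l)
      rw [← hS1, ← hS2, Finset.card_erase_of_mem (Finset.mem_univ i),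
        Finset.card_univ, Fintype.card_fin] at this
      have h' : S1.card + S2.card + 1 = n := by omega
      have := congrArg (Nat.cast : ℕ → ℝ) h'
      push_cast at this
      linarith
    rw [hsplit, h1, h2]
    linarith
  subst hρ
  simp only [hA]
  ext l m
  simp only [Matrix.smul_apply, Matrix.sum_apply, Matrix.vecMulVec_apply, smul_eq_mul]
  have hinner : ∀ i : Fin n,
      ∑ j ∈ univ.erase i, ∑ k ∈ univ.erase i,
        Real.sign (X i l - X j l) * Real.sign (X i m - X k m)
      = 4 * (((r i l : ℝ) - ((n : ℝ) + 1) / 2) * ((r i m : ℝ) - ((n : ℝ) + 1) / 2)) := by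
    intro i
    rw [← Finset.sum_mul_sum, hD i l, hD i m]
    ring
  rw [Finset.sum_congr rfl (fun i _ => hinner i), Finset.mul_sum, Finset.mul_sum]
  exact Finset.sum_congr rfl (fun i _ => by ring)
end

section
/- Let s_1, …, s_p be vectors in ℂⁿ and let z be a nonzero complex number such that the matrices D = (1/p) Σ_{i=1}^p s_i s_iᵀ − z I_n, each D_j = D − (1/p) s_j s_jᵀ, and (1/p)SᵀS − zI_p are invertible, where S is the n×p matrix with columns s_1,…,s_p, and such that 1 + (1/p) s_jᵀ D_j⁻¹ s_j ≠ 0 for every j. Then tr( ((1/p) Sᵀ S − z I_p)⁻¹ ) = −(1/z) Σ_{j=1}^p 1/(1 + (1/p) s_jᵀ D_j⁻¹ s_j). -/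
open Matrix

/-- For vectors `s₁,…,s_p ∈ ℂⁿ` and `z ≠ 0`, with
`D = (1/p)Σ sᵢsᵢᵀ − zIₙ`, `Dⱼ = D − (1/p)sⱼsⱼᵀ`, `S` the `n×p` matrix with columns `sᵢ`,
all the indicated matrices invertible and `1 + (1/p)sⱼᵀDⱼ⁻¹sⱼ ≠ 0`, one has
`tr(((1/p)SᵀS − zI_p)⁻¹) = −(1/z) Σⱼ 1/(1 + (1/p)sⱼᵀDⱼ⁻¹sⱼ)`. -/
theorem trace_resolvent_sum_beta (n p : ℕ) (hn : 1 ≤ n) (hp : 1 ≤ p)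
    (s : Fin p → (Fin n → ℂ)) (z : ℂ) (hz : z ≠ 0)
    (S : Matrix (Fin n) (Fin p) ℂ) (hS : S = Matrix.of fun i j => s j i)
    (D : Matrix (Fin n) (Fin n) ℂ)
    (hD : D = (p : ℂ)⁻¹ • (∑ i : Fin p, Matrix.vecMulVec (s i) (s i))
        - z • (1 : Matrix (Fin n) (Fin n) ℂ))
    (Dj : Fin p → Matrix (Fin n) (Fin n) ℂ)
    (hDj : ∀ j, Dj j = D - (p : ℂ)⁻¹ • Matrix.vecMulVec (s j) (s j))
    (hDinv : IsUnit D) (hDjinv : ∀ j, IsUnit (Dj j))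
    (hPinv : IsUnit ((p : ℂ)⁻¹ • (Sᵀ * S) - z • (1 : Matrix (Fin p) (Fin p) ℂ)))
    (hden : ∀ j, 1 + (p : ℂ)⁻¹ * (s j ⬝ᵥ ((Dj j)⁻¹ *ᵥ s j)) ≠ 0) :
    (((p : ℂ)⁻¹ • (Sᵀ * S) - z • (1 : Matrix (Fin p) (Fin p) ℂ))⁻¹).trace
      = -(1 / z) * ∑ j : Fin p, (1 + (p : ℂ)⁻¹ * (s j ⬝ᵥ ((Dj j)⁻¹ *ᵥ s j)))⁻¹ := by
  have hpC : (p : ℂ) ≠ 0 := Nat.cast_ne_zero.mpr (by omega)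
  set B : Matrix (Fin p) (Fin p) ℂ := (p : ℂ)⁻¹ • (Sᵀ * S) - z • 1 with hB
  have hBd : IsUnit B.det := (isUnit_iff_isUnit_det B).mp hPinv
  have hDd : IsUnit D.det := (isUnit_iff_isUnit_det D).mp hDinv
  -- S Sᵀ = Σ vecMulVec
  have hSST : S * Sᵀ = ∑ i : Fin p, Matrix.vecMulVec (s i) (s i) := by
    ext a b
    simp [hS, Matrix.mul_apply, Matrix.vecMulVec, Matrix.sum_apply]
  -- intertwining
  have hSB : S * B = D * S := by
    rw [hB, hD, Matrix.mul_sub, Matrix.sub_mul, Matrix.mul_smul, Matrix.smul_mul,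
      Matrix.mul_smul, Matrix.smul_mul, ← hSST, Matrix.mul_assoc]
    simp
  have hcomm : S * B⁻¹ = D⁻¹ * S := by
    have h1 : D⁻¹ * (S * B) * B⁻¹ = D⁻¹ * (D * S) * B⁻¹ := by rw [hSB]
    calc S * B⁻¹ = D⁻¹ * D * S * B⁻¹ := by rw [Matrix.nonsing_inv_mul D hDd, Matrix.one_mul]
    _ = D⁻¹ * (S * B) * B⁻¹ := by rw [Matrix.mul_assoc D⁻¹ D S, h1]
    _ = D⁻¹ * S * (B * B⁻¹) := by rw [Matrix.mul_assoc, Matrix.mul_assoc, Matrix.mul_assoc]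
    _ = D⁻¹ * S := by rw [Matrix.mul_nonsing_inv B hBd, Matrix.mul_one]
  -- trace equation
  have hBB : B⁻¹ * B = 1 := Matrix.nonsing_inv_mul B hBd
  have htr1 : (p : ℂ)⁻¹ * (Sᵀ * (D⁻¹ * S)).trace - z * B⁻¹.trace = (p : ℂ) := by
    have := congrArg Matrix.trace hBB
    rw [hB, Matrix.mul_sub, Matrix.mul_smul, Matrix.mul_smul, Matrix.trace_sub,
      Matrix.trace_smul, Matrix.trace_smul, Matrix.mul_one, Matrix.trace_one] at this
    have h2 : (B⁻¹ * (Sᵀ * S)).trace = (Sᵀ * (D⁻¹ * S)).trace := by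
      rw [Matrix.trace_mul_comm, Matrix.mul_assoc, hcomm]
    rw [h2] at this
    simpa [smul_eq_mul, Fintype.card_fin] using this
  -- trace as sum of quadratic forms
  have htr2 : (Sᵀ * (D⁻¹ * S)).trace = ∑ j : Fin p, s j ⬝ᵥ (D⁻¹ *ᵥ s j) := by
    rw [Matrix.trace]
    congr 1; ext j
    simp [hS, Matrix.diag, Matrix.mul_apply, dotProduct, Matrix.mulVec, Finset.mul_sum]
  -- Sherman-Morrison per j
  have hSM : ∀ j : Fin p, (p : ℂ)⁻¹ * (s j ⬝ᵥ (D⁻¹ *ᵥ s j))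
      = 1 - (1 + (p : ℂ)⁻¹ * (s j ⬝ᵥ ((Dj j)⁻¹ *ᵥ s j)))⁻¹ := by
    intro j
    set β := (p : ℂ)⁻¹ * (s j ⬝ᵥ ((Dj j)⁻¹ *ᵥ s j)) with hβ
    have hq : (1 : ℂ) + β ≠ 0 := hden j
    have hjd : IsUnit (Dj j).det := (isUnit_iff_isUnit_det _).mp (hDjinv j)
    have hDdecomp : D = Dj j + (p : ℂ)⁻¹ • Matrix.vecMulVec (s j) (s j) := by
      rw [hDj j]; abel
    have hkey : D *ᵥ ((1 + β)⁻¹ • ((Dj j)⁻¹ *ᵥ s j)) = s j := by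
      rw [Matrix.mulVec_smul, hDdecomp, Matrix.add_mulVec, Matrix.smul_mulVec]
      have h1 : Dj j *ᵥ ((Dj j)⁻¹ *ᵥ s j) = s j := by
        rw [Matrix.mulVec_mulVec, Matrix.mul_nonsing_inv _ hjd, Matrix.one_mulVec]
      have h2 : Matrix.vecMulVec (s j) (s j) *ᵥ ((Dj j)⁻¹ *ᵥ s j)
          = (s j ⬝ᵥ ((Dj j)⁻¹ *ᵥ s j)) • s j := by
        ext a
        simp only [Matrix.vecMulVec, Matrix.mulVec, dotProduct, Pi.smul_apply,
          smul_eq_mul, Matrix.of_apply, Finset.mul_sum, Finset.sum_mul]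
        refine Finset.sum_congr rfl fun x _ => ?_
        exact Finset.sum_congr rfl fun y _ => by ring
      rw [h1, h2, smul_smul, ← hβ, smul_add, smul_smul]
      have h3 : (1 + β)⁻¹ • s j + ((1 + β)⁻¹ * β) • s j = ((1 + β)⁻¹ * (1 + β)) • s j := by
        rw [mul_add, mul_one, add_smul]
      rw [h3, inv_mul_cancel₀ hq, one_smul]
    have hinv : D⁻¹ *ᵥ s j = (1 + β)⁻¹ • ((Dj j)⁻¹ *ᵥ s j) := by
      have h4 := congrArg (fun v => D⁻¹ *ᵥ v) hkey
      simpa [Matrix.mulVec_mulVec, Matrix.nonsing_inv_mul _ hDd, Matrix.one_mulVec]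
        using h4.symm
    rw [hinv, dotProduct_smul, smul_eq_mul]
    have h5 : (p : ℂ)⁻¹ * ((1 + β)⁻¹ * (s j ⬝ᵥ ((Dj j)⁻¹ *ᵥ s j)))
        = (1 + β)⁻¹ * β := by rw [hβ]; ring
    rw [h5, eq_sub_iff_add_eq]
    have h6 : (1 + β)⁻¹ * β + (1 + β)⁻¹ = (1 + β)⁻¹ * (1 + β) := by ring
    rw [h6, inv_mul_cancel₀ hq]
  -- conclude
  have hsum : (p : ℂ)⁻¹ * ∑ j : Fin p, s j ⬝ᵥ (D⁻¹ *ᵥ s j)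
      = (p : ℂ) - ∑ j : Fin p, (1 + (p : ℂ)⁻¹ * (s j ⬝ᵥ ((Dj j)⁻¹ *ᵥ s j)))⁻¹ := by
    rw [Finset.mul_sum]
    rw [Finset.sum_congr rfl (fun j _ => hSM j), Finset.sum_sub_distrib]
    simp
  rw [htr2, hsum] at htr1
  have hzt : z * B⁻¹.trace
      = -∑ j : Fin p, (1 + (p : ℂ)⁻¹ * (s j ⬝ᵥ ((Dj j)⁻¹ *ᵥ s j)))⁻¹ := by
    linear_combination -htr1
  have h7 : B⁻¹.trace = z⁻¹ * (z * B⁻¹.trace) := by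
    rw [← mul_assoc, inv_mul_cancel₀ hz, one_mul]
  rw [h7, hzt, one_div]
  ring
end

section
/- For every real y with 0 < y ≤ 1 and every integer k ≥ 1, the Marčenko–Pastur moment identity holds: ∫_{(1−√y)²}^{(1+√y)²} x^k · √((x − (1−√y)²)·((1+√y)² − x)) / (2π x y) dx = Σ_{j=0}^{k−1} (y^j/(j+1))·C(k,j)·C(k−1,j), where C(m,r) denotes the binomial coefficient. -/
/-!
The substitution `x = 1 + y + 2√y t` maps `[-1, 1]` onto the support and turns the density,
after cancelling the factor `x`, into a multiple of the semicircle weight `√(1 - t²)`. Its moments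
vanish in odd degree and equal `π/2 · Cat(n) / 4ⁿ` in degree `2n` (put `t = sin θ` and use the
Wallis recursion), so expanding `(1 + y + 2√y t) ^ (k - 1)` binomially gives the `k`-th moment as
the Touchard-type sum `∑ₙ Cat(n) C(k-1, 2n) yⁿ (1 + y) ^ (k-1-2n)`. Both this sum and the Narayana
polynomial on the right are `∑_{n ≤ j < k} C(k-1, j) C(j, n) C(k-1-j, n) yʲ / (n + 1)`: the first
by the trinomial identity for choosing disjoint subsets, the second by Vandermonde's identity.
-/

open Real Finset intervalIntegral

lemma integral_sin_pow_add_two_symm (m : ℕ) :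
    ∫ x in -(π / 2)..π / 2, sin x ^ (m + 2) =
      (m + 1) / (m + 2) * ∫ x in -(π / 2)..π / 2, sin x ^ m := by
  simp [integral_sin_pow]

lemma integral_sin_pow_two_mul_symm (n : ℕ) :
    ∫ x in -(π / 2)..π / 2, sin x ^ (2 * n) = π * n.centralBinom / 4 ^ n := by
  induction n with
  | zero => simp
  | succ n ih =>
    have h := Nat.succ_mul_centralBinom_succ n
    rw [mul_add, mul_one, integral_sin_pow_add_two_symm, ih]
    rify at h
    push_cast
    field_simp
    linear_combination (-2 * 4 ^ n : ℝ) * h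

lemma integral_pow_mul_sqrt_one_sub_sq (m : ℕ) :
    ∫ t in (-1 : ℝ)..1, t ^ m * √(1 - t ^ 2) = (∫ x in -(π / 2)..π / 2, sin x ^ m) / (m + 2) := by
  have h_subst := integral_comp_mul_deriv (a := -(π / 2)) (b := π / 2)
    (fun x _ => hasDerivAt_sin x) continuous_cos.continuousOn
    (g := fun t => t ^ m * √(1 - t ^ 2)) (by fun_prop)
  simp only [sin_neg, sin_pi_div_two] at h_subst
  have h_integrand : Set.EqOn (fun x => ((fun t => t ^ m * √(1 - t ^ 2)) ∘ sin) x * cos x)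
      (fun x => sin x ^ m - sin x ^ (m + 2)) (Set.uIcc (-(π / 2)) (π / 2)) := by
    intro x hx
    rw [Set.uIcc_of_le (by linarith [pi_pos])] at hx
    have hcos : √(1 - sin x ^ 2) = cos x := by
      rw [← cos_sq', sqrt_sq (cos_nonneg_of_mem_Icc hx)]
    simp only [Function.comp_apply, hcos]
    linear_combination sin x ^ m * cos_sq' x
  rw [← h_subst, integral_congr h_integrand,
    integral_sub (by apply Continuous.intervalIntegrable; fun_prop)
      (by apply Continuous.intervalIntegrable; fun_prop),
    integral_sin_pow_add_two_symm]
  field_simp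
  ring

lemma integral_pow_mul_sqrt_one_sub_sq_two_mul_add_one (n : ℕ) :
    ∫ t in (-1 : ℝ)..1, t ^ (2 * n + 1) * √(1 - t ^ 2) = 0 := by
  have h := integral_comp_neg (a := -1) (b := 1) fun t : ℝ => t ^ (2 * n + 1) * √(1 - t ^ 2)
  simp only [neg_neg, neg_sq, Odd.neg_pow (odd_two_mul_add_one n), neg_mul,
    intervalIntegral.integral_neg] at h
  linarith

lemma integral_pow_mul_sqrt_one_sub_sq_two_mul (n : ℕ) :
    ∫ t in (-1 : ℝ)..1, t ^ (2 * n) * √(1 - t ^ 2) = π / 2 * catalan n / 4 ^ n := by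
  have h := succ_mul_catalan_eq_centralBinom n
  rify at h
  rw [integral_pow_mul_sqrt_one_sub_sq, integral_sin_pow_two_mul_symm, ← h]
  push_cast
  field_simp

lemma Finset.sum_range_eq_sum_range_two_mul {M : Type*} [AddCommMonoid M] {f : ℕ → M} {N : ℕ}
    (h_odd : ∀ n, f (2 * n + 1) = 0) (h_ge : ∀ m, N ≤ m → f m = 0) :
    ∑ m ∈ range N, f m = ∑ n ∈ range N, f (2 * n) := by
  have h_double : ∀ M, ∑ m ∈ range (2 * M), f m = ∑ n ∈ range M, f (2 * n) := by
    intro M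
    induction M with
    | zero => simp
    | succ M ih => rw [mul_add, mul_one, sum_range_succ _ (2 * M + 1), sum_range_succ _ (2 * M),
        h_odd, add_zero, ih, sum_range_succ]
  rw [← h_double, ← sum_range_add_sum_Ico _ (by omega : N ≤ 2 * N),
    sum_eq_zero fun m hm => h_ge m (mem_Ico.mp hm).1, add_zero]

lemma integral_add_mul_pow_mul_sqrt_one_sub_sq (c r : ℝ) (K : ℕ) :
    ∫ t in (-1 : ℝ)..1, (c + r * t) ^ K * √(1 - t ^ 2) =
      π / 2 * ∑ n ∈ range (K + 1),
        catalan n * K.choose (2 * n) * (r / 2) ^ (2 * n) * c ^ (K - 2 * n) := by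
  have h_expand : ∀ t : ℝ, (c + r * t) ^ K * √(1 - t ^ 2) =
      ∑ m ∈ range (K + 1), r ^ m * c ^ (K - m) * K.choose m * (t ^ m * √(1 - t ^ 2)) := by
    intro t
    rw [add_comm, add_pow, sum_mul]
    exact sum_congr rfl fun m _ => by ring
  simp_rw [h_expand]
  rw [integral_finsetSum fun m _ => by apply Continuous.intervalIntegrable; fun_prop]
  simp_rw [integral_const_mul]
  rw [sum_range_eq_sum_range_two_mul (by simp [integral_pow_mul_sqrt_one_sub_sq_two_mul_add_one])
    fun m hm => by simp [Nat.choose_eq_zero_of_lt (by omega : K < m)], mul_sum]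
  refine sum_congr rfl fun n _ => ?_
  rw [integral_pow_mul_sqrt_one_sub_sq_two_mul, div_pow, pow_mul (2 : ℝ)]
  norm_num
  field_simp

lemma integral_mul_sqrt_sub_mul_sub (f : ℝ → ℝ) (c : ℝ) {r : ℝ} (hr : 0 ≤ r) :
    ∫ x in (c - r)..(c + r), f x * √((x - (c - r)) * (c + r - x)) =
      r ^ 2 * ∫ t in (-1 : ℝ)..1, f (c + r * t) * √(1 - t ^ 2) := by
  have h := mul_integral_comp_mul_add (a := -1) (b := 1)
    (f := fun x => f x * √((x - (c - r)) * (c + r - x))) r c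
  rw [show r * -1 + c = c - r by ring, show r * 1 + c = c + r by ring] at h
  rw [← h, sq, mul_assoc]
  congr 1
  rw [← integral_const_mul]
  refine intervalIntegral.integral_congr fun t _ => ?_
  have h_radicand : (r * t + c - (c - r)) * (c + r - (r * t + c)) = r ^ 2 * (1 - t ^ 2) := by ring
  rw [h_radicand, sqrt_mul (sq_nonneg r), sqrt_sq hr, add_comm c]
  ring

lemma Nat.choose_mul_choose_sub_comm (N a b : ℕ) :
    N.choose a * (N - a).choose b = N.choose b * (N - b).choose a := by
  have ha := Nat.choose_mul (n := N) (Nat.le_add_right a b)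
  have hb := Nat.choose_mul (n := N) (Nat.le_add_left b a)
  rw [Nat.add_sub_cancel_left, Nat.choose_symm_add] at ha
  rw [Nat.add_sub_cancel] at hb
  rw [← ha, ← hb]

lemma Nat.choose_add_mul_choose_mul_choose_sub (K n i : ℕ) :
    K.choose (n + i) * (n + i).choose n * (K - (n + i)).choose n =
      K.choose (2 * n) * (2 * n).choose n * (K - 2 * n).choose i := by
  rw [Nat.choose_mul (Nat.le_add_right n i), Nat.choose_mul (by omega : n ≤ 2 * n),
    Nat.add_sub_cancel_left, show 2 * n - n = n by omega, mul_assoc, mul_assoc,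
    show K - (n + i) = K - n - i by omega, show K - 2 * n = K - n - n by omega,
    Nat.choose_mul_choose_sub_comm]

lemma Nat.sum_range_choose_mul_choose_add_one (j r : ℕ) :
    ∑ n ∈ range (j + 1), r.choose n * (j + 1).choose (n + 1) = (r + (j + 1)).choose j := by
  rw [Nat.add_choose_eq, Finset.Nat.sum_antidiagonal_eq_sum_range_succ_mk]
  refine sum_congr rfl fun n hn => ?_
  rw [Nat.choose_symm_of_eq_add (by simp at hn; omega : j + 1 = (j - n) + (n + 1))]

lemma sum_range_choose_mul_choose_div_add_one (j r : ℕ) :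
    ∑ n ∈ range (j + 1), (j.choose n * r.choose n : ℝ) / (n + 1) =
      (r + (j + 1)).choose j / (j + 1) := by
  have h_absorb : ∀ n, (j.choose n : ℝ) / (n + 1) = (j + 1).choose (n + 1) / (j + 1) := by
    intro n
    have h := Nat.add_one_mul_choose_eq j n
    rify at h
    field_simp
    linarith
  simp_rw [mul_comm (j.choose _ : ℝ), mul_div_assoc, h_absorb, ← mul_div_assoc, ← sum_div]
  exact_mod_cast congrArg (fun m : ℕ => (m : ℝ) / (j + 1))
    (Nat.sum_range_choose_mul_choose_add_one j r)

lemma one_add_pow_eq_sum_range {R : Type*} [CommSemiring R] (x : R) {m N : ℕ} (h : m < N) :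
    (1 + x) ^ m = ∑ i ∈ range N, m.choose i * x ^ i := by
  calc (1 + x) ^ m = ∑ i ∈ range (m + 1), m.choose i * x ^ i := by
        rw [add_comm, add_pow]
        exact sum_congr rfl fun i _ => by ring
    _ = ∑ i ∈ range N, m.choose i * x ^ i :=
        sum_subset (range_subset_range.mpr h) fun i _ hi => by
          simp [Nat.choose_eq_zero_of_lt (by simpa using hi : m < i)]

lemma sum_catalan_mul_choose_mul_pow (K : ℕ) (y : ℝ) :
    ∑ n ∈ range (K + 1), catalan n * K.choose (2 * n) * y ^ n * (1 + y) ^ (K - 2 * n) =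
      ∑ j ∈ range (K + 1), y ^ j / (j + 1) * (K + 1).choose j * K.choose j := by
  have h_row : ∀ j ∈ range (K + 1), y ^ j / (j + 1) * (K + 1).choose j * K.choose j =
      ∑ n ∈ range (j + 1), K.choose j * j.choose n * (K - j).choose n / (n + 1) * y ^ j := by
    intro j hj
    have h := sum_range_choose_mul_choose_div_add_one j (K - j)
    rw [show K - j + (j + 1) = K + 1 by have := mem_range.mp hj; omega] at h
    simp_rw [← sum_mul, mul_assoc (K.choose j : ℝ), mul_div_assoc, ← mul_sum, ← mul_div_assoc, h]
    ring
  have h_col : ∀ n ∈ Ico 0 (K + 1),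
      ∑ j ∈ Ico n (K + 1), K.choose j * j.choose n * (K - j).choose n / (n + 1) * y ^ j =
        catalan n * K.choose (2 * n) * y ^ n * (1 + y) ^ (K - 2 * n) := by
    intro n hn
    have h_cat := succ_mul_catalan_eq_centralBinom n
    rw [Nat.centralBinom_eq_two_mul_choose] at h_cat
    have h_lt : K - 2 * n < K + 1 - n := by have := (mem_Ico.mp hn).2; omega
    rw [sum_Ico_eq_sum_range, one_add_pow_eq_sum_range y h_lt, mul_sum]
    refine sum_congr rfl fun i _ => ?_
    have h := Nat.choose_add_mul_choose_mul_choose_sub K n i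
    rw [← h_cat] at h
    rify at h
    field_simp
    linear_combination y ^ (n + i) * h
  rw [sum_congr rfl h_row]
  simp_rw [range_eq_Ico]
  rw [← sum_Ico_Ico_comm, sum_congr rfl h_col]

theorem marchenko_pastur_moments_general (y : ℝ) (hy0 : 0 < y) (k : ℕ) (hk : 1 ≤ k) :
    (∫ x in ((1 - Real.sqrt y) ^ 2)..((1 + Real.sqrt y) ^ 2),
        x ^ k * Real.sqrt ((x - (1 - Real.sqrt y) ^ 2) * ((1 + Real.sqrt y) ^ 2 - x))
          / (2 * Real.pi * x * y))
      = ∑ j ∈ Finset.range k,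
          y ^ j / ((j : ℝ) + 1) * (Nat.choose k j : ℝ) * (Nat.choose (k - 1) j : ℝ) := by
  obtain ⟨K, rfl⟩ : ∃ K, k = K + 1 := ⟨k - 1, by omega⟩
  have hs : √y ^ 2 = y := sq_sqrt hy0.le
  have h_lo : (1 - √y) ^ 2 = 1 + y - 2 * √y := by linear_combination hs
  have h_hi : (1 + √y) ^ 2 = 1 + y + 2 * √y := by linear_combination hs
  rw [h_lo, h_hi]
  calc _ = (2 * π * y)⁻¹ * ∫ x in (1 + y - 2 * √y)..(1 + y + 2 * √y),
        x ^ K * √((x - (1 + y - 2 * √y)) * (1 + y + 2 * √y - x)) := by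
        rw [← integral_const_mul]
        refine integral_congr_ae ((MeasureTheory.volume.ae_ne 0).mono fun x hx _ => ?_)
        field_simp
        ring
    _ = ∑ n ∈ range (K + 1), catalan n * K.choose (2 * n) * y ^ n * (1 + y) ^ (K - 2 * n) := by
        rw [integral_mul_sqrt_sub_mul_sub (· ^ K) _ (by positivity),
          integral_add_mul_pow_mul_sqrt_one_sub_sq, mul_sum, mul_sum, mul_sum]
        refine sum_congr rfl fun n _ => ?_
        rw [mul_div_cancel_left₀ _ two_ne_zero, pow_mul, hs]
        field_simp
        linear_combination (catalan n * K.choose (2 * n) : ℝ) * hs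
    _ = _ := by rw [sum_catalan_mul_choose_mul_pow, Nat.add_sub_cancel]

/-- (Moments of the Marčenko–Pastur law.)  For `0 < y ≤ 1` and `k ≥ 1`,
`∫_{(1−√y)²}^{(1+√y)²} xᵏ √((x−(1−√y)²)((1+√y)²−x))/(2πxy) dx
  = Σ_{j=0}^{k−1} (yʲ/(j+1))·C(k,j)·C(k−1,j)`. -/
theorem marchenko_pastur_moments (y : ℝ) (hy0 : 0 < y) (hy1 : y ≤ 1) (k : ℕ) (hk : 1 ≤ k) :
    (∫ x in ((1 - Real.sqrt y) ^ 2)..((1 + Real.sqrt y) ^ 2),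
        x ^ k * Real.sqrt ((x - (1 - Real.sqrt y) ^ 2) * ((1 + Real.sqrt y) ^ 2 - x))
          / (2 * Real.pi * x * y))
      = ∑ j ∈ Finset.range k,
          y ^ j / ((j : ℝ) + 1) * (Nat.choose k j : ℝ) * (Nat.choose (k - 1) j : ℝ) :=
  marchenko_pastur_moments_general y hy0 k hk
end
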